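/- Let f be a continuous function on 𝕋 whose Fourier series converges uniformly, with U-norm ‖f‖_U = sup_N ‖S_N(f)‖_{C(𝕋)}. Then for every integer n, the function e_n f (where e_n(t) = e^{int}) also has uniformly convergent Fourier series and ‖e_n f‖_U ≤ c·‖f‖_U·log(|n|+2), where c > 0 is an absolute constant. -/

import Mathlib

open MeasureTheory Filter

/-- The `k`-th Fourier coefficient of a function on the circle, identified with a
`2π`-periodic function on `ℝ`: `f̂(k) = (1/2π) ∫_{-π}^{π} f(t) e^{-ikt} dt`. -/
noncomputable def fourierCoef (f : ℝ → ℂ) (k : ℤ) : ℂ :=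
  (1 / (2 * Real.pi)) * ∫ t in (-Real.pi)..Real.pi, f t * Complex.exp (-(k : ℂ) * Complex.I * t)

/-- The `N`-th partial sum of the Fourier series: `S_N(f)(t) = ∑_{|k| ≤ N} f̂(k) e^{ikt}`. -/
noncomputable def partialFourierSum (f : ℝ → ℂ) (N : ℕ) (t : ℝ) : ℂ :=
  ∑ k ∈ Finset.Icc (-(N : ℤ)) (N : ℤ), fourierCoef f k * Complex.exp ((k : ℂ) * Complex.I * t)

/-- The norm of the space `U(𝕋)`: `‖f‖_U = sup_N ‖S_N(f)‖_{C(𝕋)}`. -/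
noncomputable def uNorm (f : ℝ → ℂ) : ℝ :=
  ⨆ N : ℕ, ⨆ t : ℝ, ‖partialFourierSum f N t‖

/-!
Multiplication by `e_n` shifts Fourier coefficients by `n`, so `S_N(e_n f)` is `e_n` times the sum
of `f̂(j) e_j` over `|j + n| ≤ N`. Up to one coefficient, that window is the window `|j| ≤ N + |n|`
of `S_{N+|n|}(f)` minus a block of `2|n| + 1` consecutive coefficients centred at `±N`, and such a
block is `e_{±N} S_{|n|}(e_{∓N} f)`. The Lebesgue-constant bound `‖S_m g‖_∞ ≤ 4 log (m + 2) ‖g‖_∞`,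
from `∫ |D_m| ≤ 2π (1 + log (2m + 1))`, therefore gives the norm estimate. Since the coefficients of
`f` tend to `0` and the block has fixed length, the same decomposition gives uniform convergence.
-/

open Real
open scoped ComplexConjugate

noncomputable def fourierExp (k : ℤ) (t : ℝ) : ℂ := Complex.exp (k * Complex.I * t)

@[simp]
lemma norm_fourierExp (k : ℤ) (t : ℝ) : ‖fourierExp k t‖ = 1 := by
  simp [fourierExp, Complex.norm_exp]

@[fun_prop]
lemma continuous_fourierExp (k : ℤ) : Continuous (fourierExp k) := by
  unfold fourierExp; fun_prop

lemma fourierExp_mul_fourierExp (j k : ℤ) (t : ℝ) :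
    fourierExp j t * fourierExp k t = fourierExp (j + k) t := by
  simp only [fourierExp, ← Complex.exp_add]; push_cast; ring_nf

lemma fourierExp_neg_mul_fourierExp (k : ℤ) (s t : ℝ) :
    fourierExp (-k) s * fourierExp k t = fourierExp k (t - s) := by
  simp only [fourierExp, ← Complex.exp_add]; push_cast; ring_nf

lemma fourierExp_natCast (j : ℕ) (t : ℝ) : fourierExp j t = fourierExp 1 t ^ j := by
  simp only [fourierExp, ← Complex.exp_nat_mul]; push_cast; ring_nf

lemma fourierExp_neg_right (k : ℤ) (t : ℝ) : fourierExp k (-t) = conj (fourierExp k t) := by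
  simp only [fourierExp, ← Complex.exp_conj, map_mul, Complex.conj_I, Complex.conj_ofReal,
    map_intCast]
  push_cast; ring_nf

lemma periodic_fourierExp (k : ℤ) : Function.Periodic (fourierExp k) (2 * π) := by
  intro t
  simp only [fourierExp]
  rw [show (k : ℂ) * Complex.I * ((t + 2 * π : ℝ) : ℂ) = k * Complex.I * t + k * (2 * π * Complex.I)
    by push_cast; ring, Complex.exp_add, Complex.exp_int_mul_two_pi_mul_I, mul_one]

lemma integral_fourierExp_eq_zero {k : ℤ} (hk : k ≠ 0) :
    ∫ t in (-π)..π, fourierExp k t = 0 := by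
  have hc : (k : ℂ) * Complex.I ≠ 0 := mul_ne_zero (Int.cast_ne_zero.mpr hk) Complex.I_ne_zero
  simp only [fourierExp]
  rw [integral_exp_mul_complex hc]
  have := periodic_fourierExp k (-π)
  simp only [fourierExp, show -π + 2 * π = π by ring] at this
  rw [this, sub_self, zero_div]

lemma fourierCoef_eq_integral (f : ℝ → ℂ) (k : ℤ) :
    fourierCoef f k = (1 / (2 * π)) * ∫ t in (-π)..π, f t * fourierExp (-k) t := by
  simp only [fourierCoef, fourierExp]; push_cast; ring_nf

lemma norm_fourierCoef_le (f : ℝ → ℂ) {B : ℝ} (hB : ∀ s, ‖f s‖ ≤ B) (k : ℤ) :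
    ‖fourierCoef f k‖ ≤ B := by
  have hint : ‖∫ t in (-π)..π, f t * fourierExp (-k) t‖ ≤ B * |π - -π| :=
    intervalIntegral.norm_integral_le_of_norm_le_const fun s _ ↦ by simpa using hB s
  rw [abs_of_pos (by linarith [pi_pos])] at hint
  rw [fourierCoef_eq_integral, norm_mul]
  calc ‖(1 / (2 * π) : ℂ)‖ * ‖∫ t in (-π)..π, f t * fourierExp (-k) t‖
      ≤ 1 / (2 * π) * (B * (π - -π)) := by
        gcongr
        simp [abs_of_pos pi_pos]
    _ = B := by field_simp; ring

lemma fourierCoef_fourierExp_mul (f : ℝ → ℂ) (a k : ℤ) :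
    fourierCoef (fun s ↦ fourierExp a s * f s) k = fourierCoef f (k - a) := by
  simp only [fourierCoef_eq_integral]
  congr 2 with t
  rw [mul_comm (fourierExp a t), mul_assoc, fourierExp_mul_fourierExp]
  ring_nf

lemma fourierCoef_sub {f g : ℝ → ℂ} (hf : IntervalIntegrable f volume (-π) π)
    (hg : IntervalIntegrable g volume (-π) π) (k : ℤ) :
    fourierCoef (f - g) k = fourierCoef f k - fourierCoef g k := by
  simp only [fourierCoef_eq_integral, ← mul_sub, Pi.sub_apply, sub_mul]
  rw [intervalIntegral.integral_sub (hf.mul_continuousOn (continuous_fourierExp _).continuousOn)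
    (hg.mul_continuousOn (continuous_fourierExp _).continuousOn)]

lemma partialFourierSum_eq_sum_fourierExp (f : ℝ → ℂ) (N : ℕ) (t : ℝ) :
    partialFourierSum f N t =
      ∑ k ∈ Finset.Icc (-(N : ℤ)) N, fourierCoef f k * fourierExp k t := rfl

lemma continuous_partialFourierSum (f : ℝ → ℂ) (N : ℕ) : Continuous (partialFourierSum f N) := by
  unfold partialFourierSum; fun_prop

lemma fourierCoef_partialFourierSum_of_lt (f : ℝ → ℂ) {N : ℕ} {k : ℤ} (hk : N < k.natAbs) :
    fourierCoef (partialFourierSum f N) k = 0 := by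
  have hterm : ∀ j ∈ Finset.Icc (-(N : ℤ)) N,
      ∫ t in (-π)..π, fourierCoef f j * fourierExp (j + -k) t = 0 := by
    intro j hj
    rw [Finset.mem_Icc] at hj
    rw [intervalIntegral.integral_const_mul, integral_fourierExp_eq_zero (by omega), mul_zero]
  rw [fourierCoef_eq_integral]
  simp only [partialFourierSum_eq_sum_fourierExp, Finset.sum_mul, mul_assoc,
    fourierExp_mul_fourierExp]
  rw [intervalIntegral.integral_finsetSum fun j _ ↦
    (by fun_prop : Continuous _).intervalIntegrable _ _, Finset.sum_eq_zero hterm, mul_zero]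

lemma exists_norm_fourierCoef_le {f : ℝ → ℂ} (hf : IntervalIntegrable f volume (-π) π)
    (hconv : TendstoUniformly (fun N t ↦ partialFourierSum f N t) f atTop) {ε : ℝ} (hε : 0 < ε) :
    ∃ M : ℕ, ∀ k : ℤ, M ≤ k.natAbs → ‖fourierCoef f k‖ ≤ ε := by
  obtain ⟨M, hM⟩ := eventually_atTop.mp (Metric.tendstoUniformly_iff.mp hconv ε hε)
  refine ⟨M + 1, fun k hk ↦ ?_⟩
  have hcoef : fourierCoef (f - partialFourierSum f M) k = fourierCoef f k := by
    rw [fourierCoef_sub hf ((continuous_partialFourierSum f M).intervalIntegrable _ _),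
      fourierCoef_partialFourierSum_of_lt f (by omega), sub_zero]
  rw [← hcoef]
  exact norm_fourierCoef_le _ (fun t ↦ by simpa [dist_eq_norm] using (hM M le_rfl t).le) k

noncomputable def dirichletKernel (n : ℕ) (u : ℝ) : ℂ :=
  ∑ k ∈ Finset.Icc (-(n : ℤ)) n, fourierExp k u

@[fun_prop]
lemma continuous_dirichletKernel (n : ℕ) : Continuous (dirichletKernel n) := by
  unfold dirichletKernel; fun_prop

lemma intervalIntegrable_norm_dirichletKernel (n : ℕ) (a b : ℝ) :
    IntervalIntegrable (fun u ↦ ‖dirichletKernel n u‖) volume a b :=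
  (continuous_dirichletKernel n).norm.intervalIntegrable a b

lemma periodic_dirichletKernel (n : ℕ) : Function.Periodic (dirichletKernel n) (2 * π) := by
  intro u
  simp only [dirichletKernel, periodic_fourierExp _ u]

lemma dirichletKernel_neg (n : ℕ) (u : ℝ) :
    dirichletKernel n (-u) = conj (dirichletKernel n u) := by
  simp only [dirichletKernel, fourierExp_neg_right, map_sum]

lemma norm_dirichletKernel_le (n : ℕ) (u : ℝ) : ‖dirichletKernel n u‖ ≤ 2 * n + 1 := by
  calc ‖dirichletKernel n u‖ ≤ ∑ k ∈ Finset.Icc (-(n : ℤ)) n, ‖fourierExp k u‖ := norm_sum_le _ _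
    _ = 2 * n + 1 := by
      rw [Finset.sum_congr rfl fun k _ ↦ norm_fourierExp k u, Finset.sum_const, Int.card_Icc,
        show ((n : ℤ) + 1 - -n).toNat = 2 * n + 1 by omega, nsmul_one]
      push_cast; ring

lemma dirichletKernel_eq_geom_sum (n : ℕ) (u : ℝ) :
    dirichletKernel n u =
      fourierExp (-n) u * ∑ j ∈ Finset.range (2 * n + 1), fourierExp 1 u ^ j := by
  rw [dirichletKernel, Int.Icc_eq_finset_map, Finset.sum_map, Finset.mul_sum,
    show ((n : ℤ) + 1 - -n).toNat = 2 * n + 1 by omega]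
  refine Finset.sum_congr rfl fun j _ ↦ ?_
  simp [← fourierExp_natCast, fourierExp_mul_fourierExp]

lemma norm_dirichletKernel_le_pi_div (n : ℕ) {u : ℝ} (hu₀ : 0 < u) (huπ : u ≤ π) :
    ‖dirichletKernel n u‖ ≤ π / u := by
  set z := fourierExp 1 u
  have hz : ‖z‖ = 1 := norm_fourierExp 1 u
  -- `‖z - 1‖ = 2 sin (u / 2)`, then Jordan's inequality `sin x ≥ 2x/π` on `[0, π/2]`
  have hz_sub : 2 * u / π ≤ ‖z - 1‖ := by
    have hsin := Real.mul_le_sin (x := u / 2) (by positivity) (by linarith)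
    have hpos : 0 < 2 / π * (u / 2) := by positivity
    have : z = Complex.exp (Complex.I * u) := by simp [z, fourierExp, mul_comm]
    rw [this, Complex.norm_exp_I_mul_ofReal_sub_one, Real.norm_of_nonneg (by linarith)]
    linarith [show 2 * u / π = 2 * (2 / π * (u / 2)) by ring]
  have hgeom : ‖dirichletKernel n u‖ * ‖z - 1‖ ≤ 2 := by
    rw [dirichletKernel_eq_geom_sum, norm_mul, norm_fourierExp, one_mul, ← norm_mul, geom_sum_mul]
    calc ‖z ^ (2 * n + 1) - 1‖ ≤ ‖z ^ (2 * n + 1)‖ + ‖(1 : ℂ)‖ := norm_sub_le _ _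
      _ = 2 := by rw [norm_pow, hz]; norm_num
  rw [le_div_iff₀ hu₀]
  have := mul_le_mul_of_nonneg_left hz_sub (norm_nonneg (dirichletKernel n u))
  calc ‖dirichletKernel n u‖ * u = ‖dirichletKernel n u‖ * (2 * u / π) * (π / 2) := by
        field_simp
    _ ≤ 2 * (π / 2) := by gcongr; linarith
    _ = π := by ring

lemma integral_norm_dirichletKernel_eq (n : ℕ) :
    ∫ u in (-π)..π, ‖dirichletKernel n u‖ = 2 * ∫ u in (0 : ℝ)..π, ‖dirichletKernel n u‖ := by
  have hneg : ∫ u in (-π)..0, ‖dirichletKernel n u‖ = ∫ u in (0 : ℝ)..π, ‖dirichletKernel n u‖ := by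
    simpa [dirichletKernel_neg] using
      (intervalIntegral.integral_comp_neg (a := 0) (b := π) fun u ↦ ‖dirichletKernel n u‖).symm
  rw [← intervalIntegral.integral_add_adjacent_intervals
    (intervalIntegrable_norm_dirichletKernel n _ 0) (intervalIntegrable_norm_dirichletKernel n 0 _),
    hneg, two_mul]

lemma integral_zero_pi_norm_dirichletKernel_le (n : ℕ) :
    ∫ u in (0 : ℝ)..π, ‖dirichletKernel n u‖ ≤ π * (1 + Real.log (2 * n + 1)) := by
  have hπ := pi_pos
  -- `δ = π / (2n + 1)` is where the two pointwise bounds `2n + 1` and `π / u` cross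
  set δ := π / (2 * n + 1) with hδ
  have hδ₀ : 0 < δ := by positivity
  have hδπ : δ ≤ π := div_le_self hπ.le (by linarith [(n.cast_nonneg : (0 : ℝ) ≤ n)])
  have hnear : ∫ u in (0 : ℝ)..δ, ‖dirichletKernel n u‖ ≤ π := by
    calc ∫ u in (0 : ℝ)..δ, ‖dirichletKernel n u‖ ≤ ∫ _ in (0 : ℝ)..δ, (2 * n + 1 : ℝ) :=
          intervalIntegral.integral_mono_on hδ₀.le (intervalIntegrable_norm_dirichletKernel n _ _)
            intervalIntegrable_const
            fun u _ ↦ norm_dirichletKernel_le n u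
      _ = π := by
        rw [intervalIntegral.integral_const, hδ, sub_zero, smul_eq_mul]; field_simp
  have hfar : ∫ u in δ..π, ‖dirichletKernel n u‖ ≤ π * Real.log (2 * n + 1) := by
    have hzero : (0 : ℝ) ∉ Set.uIcc δ π := by
      rw [Set.uIcc_of_le hδπ]; exact fun h ↦ hδ₀.not_ge h.1
    calc ∫ u in δ..π, ‖dirichletKernel n u‖ ≤ ∫ u in δ..π, π * (1 / u) :=
          intervalIntegral.integral_mono_on hδπ (intervalIntegrable_norm_dirichletKernel n _ _)
            ((intervalIntegral.intervalIntegrable_one_div (fun x hx h ↦ hzero (h ▸ hx))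
              continuousOn_id).const_mul π)
            fun u hu ↦ by
              rw [mul_one_div]; exact norm_dirichletKernel_le_pi_div n (hδ₀.trans_le hu.1) hu.2
      _ = π * Real.log (2 * n + 1) := by
        rw [intervalIntegral.integral_const_mul, integral_one_div hzero, hδ]
        field_simp
  rw [← intervalIntegral.integral_add_adjacent_intervals
    (intervalIntegrable_norm_dirichletKernel n 0 δ) (intervalIntegrable_norm_dirichletKernel n δ π)]
  linarith

lemma integral_norm_dirichletKernel_le (n : ℕ) :
    ∫ u in (-π)..π, ‖dirichletKernel n u‖ ≤ 2 * π * (1 + Real.log (2 * n + 1)) := by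
  rw [integral_norm_dirichletKernel_eq, mul_assoc]
  gcongr
  exact integral_zero_pi_norm_dirichletKernel_le n

lemma partialFourierSum_eq_integral_dirichletKernel {f : ℝ → ℂ}
    (hf : IntervalIntegrable f volume (-π) π) (n : ℕ) (t : ℝ) :
    partialFourierSum f n t = 1 / (2 * π) * ∫ s in (-π)..π, f s * dirichletKernel n (t - s) := by
  have hterm : ∀ k : ℤ, fourierCoef f k * fourierExp k t =
      1 / (2 * π) * ∫ s in (-π)..π, f s * fourierExp k (t - s) := by
    intro k
    rw [fourierCoef_eq_integral, mul_assoc, ← intervalIntegral.integral_mul_const]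
    simp only [mul_assoc, fourierExp_neg_mul_fourierExp]
  simp only [partialFourierSum_eq_sum_fourierExp, hterm, ← Finset.mul_sum, dirichletKernel]
  rw [← intervalIntegral.integral_finsetSum fun k _ ↦
    hf.mul_continuousOn (by fun_prop : Continuous fun s ↦ fourierExp k (t - s)).continuousOn]
  simp only [Finset.mul_sum]

lemma integral_norm_dirichletKernel_sub (n : ℕ) (t : ℝ) :
    ∫ s in (-π)..π, ‖dirichletKernel n (t - s)‖ = ∫ u in (-π)..π, ‖dirichletKernel n u‖ := by
  have hper : Function.Periodic (fun u ↦ ‖dirichletKernel n u‖) (2 * π) := fun u ↦ by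
    simp only [periodic_dirichletKernel n u]
  rw [intervalIntegral.integral_comp_sub_left (fun u ↦ ‖dirichletKernel n u‖),
    show t - -π = t - π + 2 * π by ring, hper.intervalIntegral_add_eq (t - π) (-π),
    show -π + 2 * π = π by ring]

lemma one_add_log_two_mul_add_one_le {x : ℝ} (hx : 0 ≤ x) :
    1 + Real.log (2 * x + 1) ≤ 4 * Real.log (x + 2) := by
  have hlog2 : Real.log 2 ≤ Real.log (x + 2) := Real.log_le_log two_pos (by linarith)
  have hsq : Real.log (2 * x + 1) ≤ 2 * Real.log (x + 2) := by
    calc Real.log (2 * x + 1) ≤ Real.log ((x + 2) ^ 2) :=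
          Real.log_le_log (by positivity) (by nlinarith)
      _ = 2 * Real.log (x + 2) := by simp [Real.log_pow]
  linarith [Real.log_two_gt_d9]

lemma norm_partialFourierSum_le {f : ℝ → ℂ} (hf : IntervalIntegrable f volume (-π) π)
    {B : ℝ} (hB : ∀ s, ‖f s‖ ≤ B) (n : ℕ) (t : ℝ) :
    ‖partialFourierSum f n t‖ ≤ 4 * Real.log (n + 2) * B := by
  have hπ := pi_pos
  have hB₀ : 0 ≤ B := (norm_nonneg _).trans (hB 0)
  have hD : Continuous fun s ↦ dirichletKernel n (t - s) := by fun_prop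
  have hconv : ‖∫ s in (-π)..π, f s * dirichletKernel n (t - s)‖ ≤
      B * ∫ u in (-π)..π, ‖dirichletKernel n u‖ := by
    rw [← integral_norm_dirichletKernel_sub n t, ← intervalIntegral.integral_const_mul]
    refine (intervalIntegral.norm_integral_le_integral_norm (by linarith)).trans ?_
    refine intervalIntegral.integral_mono_on (by linarith)
      (hf.mul_continuousOn hD.continuousOn).norm ((hD.norm.const_mul B).intervalIntegrable _ _)
      fun s _ ↦ ?_
    rw [norm_mul]
    exact mul_le_mul_of_nonneg_right (hB s) (norm_nonneg _)
  rw [partialFourierSum_eq_integral_dirichletKernel hf, norm_mul]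
  calc ‖(1 / (2 * π) : ℂ)‖ * ‖∫ s in (-π)..π, f s * dirichletKernel n (t - s)‖
      ≤ 1 / (2 * π) * (B * (2 * π * (1 + Real.log (2 * n + 1)))) := by
        have : ‖(1 / (2 * π) : ℂ)‖ = 1 / (2 * π) := by simp [abs_of_pos hπ]
        rw [this]
        gcongr
        exact hconv.trans (by gcongr; exact integral_norm_dirichletKernel_le n)
    _ = (1 + Real.log (2 * n + 1)) * B := by field_simp
    _ ≤ 4 * Real.log (n + 2) * B := by gcongr; exact one_add_log_two_mul_add_one_le n.cast_nonneg

lemma Finset.sum_Icc_add_eq_sum_Icc_add_sum_Icc {α M : Type*} [LinearOrder α]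
    [LocallyFiniteOrder α] [AddCommMonoid M] (F : α → M) {a b c : α} (hab : a ≤ b) (hbc : b ≤ c) :
    ∑ j ∈ Finset.Icc a c, F j + F b = ∑ j ∈ Finset.Icc a b, F j + ∑ j ∈ Finset.Icc b c, F j := by
  have hsplit : Finset.Icc a c = Finset.Icc a b ∪ Finset.Ioc b c := by
    rw [← Finset.coe_inj, Finset.coe_union, Finset.coe_Icc, Finset.coe_Icc, Finset.coe_Ioc,
      Set.Icc_union_Ioc_eq_Icc hab hbc]
  have hdisj : Disjoint (Finset.Icc a b) (Finset.Ioc b c) :=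
    Finset.disjoint_left.mpr fun x hx hx' ↦
      (Finset.mem_Ioc.mp hx').1.not_ge (Finset.mem_Icc.mp hx).2
  rw [hsplit, Finset.sum_union hdisj, ← Finset.Ioc_insert_left hbc,
    Finset.sum_insert Finset.left_notMem_Ioc, add_assoc, add_comm (F b)]

noncomputable def fourierBlock (f : ℝ → ℂ) (c : ℤ) (m : ℕ) (t : ℝ) : ℂ :=
  ∑ j ∈ Finset.Icc (c - m) (c + m), fourierCoef f j * fourierExp j t

lemma fourierBlock_eq (f : ℝ → ℂ) (c : ℤ) (m : ℕ) (t : ℝ) :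
    fourierBlock f c m t =
      fourierExp c t * partialFourierSum (fun s ↦ fourierExp (-c) s * f s) m t := by
  rw [partialFourierSum_eq_sum_fourierExp, Finset.mul_sum, fourierBlock,
    show c - m = -m + c by ring, show c + m = m + c by ring, ← Finset.map_add_right_Icc,
    Finset.sum_map]
  refine Finset.sum_congr rfl fun k _ ↦ ?_
  rw [addRightEmbedding_apply, fourierCoef_fourierExp_mul, sub_neg_eq_add, mul_left_comm,
    fourierExp_mul_fourierExp, add_comm c]

lemma partialFourierSum_fourierExp_mul (f : ℝ → ℂ) (n : ℤ) (N : ℕ) (t : ℝ) :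
    partialFourierSum (fun s ↦ fourierExp n s * f s) N t =
      fourierExp n t * fourierBlock f (-n) N t := by
  rw [fourierBlock_eq, neg_neg, ← mul_assoc, fourierExp_mul_fourierExp, add_neg_cancel]
  simp [fourierExp]

lemma norm_fourierBlock_le {f : ℝ → ℂ} (hf : IntervalIntegrable f volume (-π) π)
    {B : ℝ} (hB : ∀ s, ‖f s‖ ≤ B) (c : ℤ) (m : ℕ) (t : ℝ) :
    ‖fourierBlock f c m t‖ ≤ 4 * Real.log (m + 2) * B := by
  rw [fourierBlock_eq, norm_mul, norm_fourierExp, one_mul]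
  exact norm_partialFourierSum_le
    (hf.continuousOn_mul (continuous_fourierExp (-c)).continuousOn) (by simpa using hB) m t

lemma norm_fourierBlock_le_of_norm_fourierCoef_le (f : ℝ → ℂ) (c : ℤ) (m : ℕ) {δ : ℝ}
    (hδ : ∀ j ∈ Finset.Icc (c - m) (c + m), ‖fourierCoef f j‖ ≤ δ) (t : ℝ) :
    ‖fourierBlock f c m t‖ ≤ (2 * m + 1) * δ := by
  calc ‖fourierBlock f c m t‖
        ≤ ∑ j ∈ Finset.Icc (c - m) (c + m), ‖fourierCoef f j * fourierExp j t‖ := norm_sum_le _ _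
    _ ≤ ∑ _j ∈ Finset.Icc (c - m) (c + m), δ :=
        Finset.sum_le_sum fun j hj ↦ by simpa using hδ j hj
    _ = (2 * m + 1) * δ := by
        rw [Finset.sum_const, Int.card_Icc, show (c + m + 1 - (c - m)).toNat = 2 * m + 1 by omega,
          nsmul_eq_mul]
        push_cast; ring

lemma exists_sum_Icc_neg_eq {M : Type*} [AddCommGroup M] (n : ℤ) (N : ℕ) :
    ∃ c : ℤ, c.natAbs = N ∧ ∀ F : ℤ → M,
      ∑ j ∈ Finset.Icc (-n - N) (-n + N), F j =
        ∑ j ∈ Finset.Icc (-(N + n.natAbs : ℕ) : ℤ) (N + n.natAbs : ℕ), F j + F (c - n) -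
          ∑ j ∈ Finset.Icc (c - n.natAbs) (c + n.natAbs), F j := by
  rcases le_or_gt 0 n with hn | hn
  · refine ⟨N, Int.natAbs_natCast N, fun F ↦ ?_⟩
    have h := Finset.sum_Icc_add_eq_sum_Icc_add_sum_Icc F
      (a := -(N + n.natAbs : ℕ)) (b := N - n) (c := (N + n.natAbs : ℕ)) (by omega) (by omega)
    rw [show -n - N = -(N + n.natAbs : ℕ) by omega, show -n + N = N - n by omega,
      show (N : ℤ) - n.natAbs = N - n by omega,
      show (N : ℤ) + n.natAbs = (N + n.natAbs : ℕ) by omega]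
    rw [h]; abel
  · refine ⟨-N, by simp, fun F ↦ ?_⟩
    have h := Finset.sum_Icc_add_eq_sum_Icc_add_sum_Icc F
      (a := -(N + n.natAbs : ℕ)) (b := -N - n) (c := (N + n.natAbs : ℕ)) (by omega) (by omega)
    rw [show -n - N = -N - n by omega, show -n + N = (N + n.natAbs : ℕ) by omega,
      show -(N : ℤ) - n.natAbs = -(N + n.natAbs : ℕ) by omega,
      show -(N : ℤ) + n.natAbs = -N - n by omega]
    rw [h]; abel

/-- `e_n · fourierBlock f (-n) N = S_N(e_n f)`, so for `n ≥ 0` (where `c = N`) this is the identity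
`S_N(e_n f) = e_n S_{N+n}(f) + e_N f̂(N-n) - e_{N+n} S_n(e_{-N} f)`. -/
lemma exists_fourierBlock_neg_eq (f : ℝ → ℂ) (n : ℤ) (N : ℕ) :
    ∃ c : ℤ, c.natAbs = N ∧ ∀ t, fourierBlock f (-n) N t =
      partialFourierSum f (N + n.natAbs) t + fourierCoef f (c - n) * fourierExp (c - n) t -
        fourierBlock f c n.natAbs t := by
  obtain ⟨c, hc, hsum⟩ := exists_sum_Icc_neg_eq (M := ℂ) n N
  exact ⟨c, hc, fun t ↦ hsum fun j ↦ fourierCoef f j * fourierExp j t⟩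

lemma norm_partialFourierSum_le_of_norm_le (f : ℝ → ℂ) {B : ℝ} (hB : ∀ s, ‖f s‖ ≤ B)
    (N : ℕ) (t : ℝ) : ‖partialFourierSum f N t‖ ≤ (2 * N + 1) * B := by
  have : partialFourierSum f N t = fourierBlock f 0 N t := by
    rw [partialFourierSum_eq_sum_fourierExp, fourierBlock, zero_sub, zero_add]
  exact this ▸ norm_fourierBlock_le_of_norm_fourierCoef_le f 0 N
    (fun j _ ↦ norm_fourierCoef_le f hB j) t

lemma exists_bound_partialFourierSum {f : ℝ → ℂ} {B : ℝ} (hB : ∀ s, ‖f s‖ ≤ B)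
    (hconv : TendstoUniformly (fun N t ↦ partialFourierSum f N t) f atTop) :
    ∃ C, ∀ N t, ‖partialFourierSum f N t‖ ≤ C := by
  obtain ⟨N₀, hN₀⟩ := eventually_atTop.mp (Metric.tendstoUniformly_iff.mp hconv 1 one_pos)
  have hB₀ : 0 ≤ B := (norm_nonneg _).trans (hB 0)
  refine ⟨(2 * N₀ + 1) * B + B + 1, fun N t ↦ ?_⟩
  rcases le_or_gt N₀ N with hN | hN
  · have hclose : ‖partialFourierSum f N t - f t‖ < 1 := by
      simpa [dist_eq_norm'] using hN₀ N hN t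
    have := norm_le_norm_add_norm_sub' (partialFourierSum f N t) (f t)
    nlinarith [hB t]
  · have hNN₀ : (N : ℝ) ≤ N₀ := by exact_mod_cast hN.le
    have := norm_partialFourierSum_le_of_norm_le f hB N t
    nlinarith

lemma norm_partialFourierSum_le_uNorm {f : ℝ → ℂ} {C : ℝ}
    (hC : ∀ N t, ‖partialFourierSum f N t‖ ≤ C) (N : ℕ) (t : ℝ) :
    ‖partialFourierSum f N t‖ ≤ uNorm f := by
  have hbdd : BddAbove (Set.range fun N ↦ ⨆ t, ‖partialFourierSum f N t‖) :=
    ⟨C, by rintro _ ⟨N, rfl⟩; exact ciSup_le (hC N)⟩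
  exact (le_ciSup ⟨C, by rintro _ ⟨t, rfl⟩; exact hC N t⟩ t).trans (le_ciSup hbdd N)

lemma norm_le_uNorm {f : ℝ → ℂ} {C : ℝ} (hC : ∀ N t, ‖partialFourierSum f N t‖ ≤ C)
    (hconv : TendstoUniformly (fun N t ↦ partialFourierSum f N t) f atTop) (t : ℝ) :
    ‖f t‖ ≤ uNorm f :=
  le_of_tendsto (hconv.tendsto_at t).norm
    (Eventually.of_forall fun N ↦ norm_partialFourierSum_le_uNorm hC N t)

lemma norm_partialFourierSum_fourierExp_mul_le {f : ℝ → ℂ}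
    (hf : IntervalIntegrable f volume (-π) π) {B : ℝ} (hB : ∀ s, ‖f s‖ ≤ B)
    (hSB : ∀ M t, ‖partialFourierSum f M t‖ ≤ B) (n : ℤ) (N : ℕ) (t : ℝ) :
    ‖partialFourierSum (fun s ↦ fourierExp n s * f s) N t‖ ≤ 7 * B * Real.log ((|n| : ℤ) + 2) := by
  obtain ⟨c, -, hdecomp⟩ := exists_fourierBlock_neg_eq f n N
  have hB₀ : 0 ≤ B := (norm_nonneg _).trans (hB 0)
  have hlog : 2 ≤ 3 * Real.log (n.natAbs + 2) := by
    have := Real.log_le_log (y := n.natAbs + 2) two_pos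
      (by linarith [n.natAbs.cast_nonneg (α := ℝ)])
    linarith [Real.log_two_gt_d9]
  have hcoef : ‖fourierCoef f (c - n) * fourierExp (c - n) t‖ ≤ B := by
    simpa using norm_fourierCoef_le f hB (c - n)
  have hblock := norm_fourierBlock_le hf hB c n.natAbs t
  rw [partialFourierSum_fourierExp_mul, norm_mul, norm_fourierExp, one_mul, hdecomp,
    ← Nat.cast_natAbs]
  calc _ ≤ ‖partialFourierSum f (N + n.natAbs) t‖ +
        ‖fourierCoef f (c - n) * fourierExp (c - n) t‖ + ‖fourierBlock f c n.natAbs t‖ :=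
        (norm_sub_le _ _).trans (by gcongr; exact norm_add_le _ _)
    _ ≤ B + B + 4 * Real.log (n.natAbs + 2) * B := by gcongr; exact hSB _ t
    _ ≤ 7 * B * Real.log (n.natAbs + 2) := by nlinarith

lemma tendstoUniformly_partialFourierSum_fourierExp_mul {f : ℝ → ℂ}
    (hf : IntervalIntegrable f volume (-π) π)
    (hconv : TendstoUniformly (fun N t ↦ partialFourierSum f N t) f atTop) (n : ℤ) :
    TendstoUniformly (fun N t ↦ partialFourierSum (fun s ↦ fourierExp n s * f s) N t)
      (fun s ↦ fourierExp n s * f s) atTop := by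
  rw [Metric.tendstoUniformly_iff]
  intro ε hε
  set m := n.natAbs
  set δ := ε / (2 * (2 * m + 2)) with hδ
  obtain ⟨N₁, hN₁⟩ :=
    eventually_atTop.mp (Metric.tendstoUniformly_iff.mp hconv (ε / 2) (half_pos hε))
  obtain ⟨M, hM⟩ := exists_norm_fourierCoef_le hf hconv (ε := δ) (by positivity)
  filter_upwards [eventually_ge_atTop (N₁ + M + m)] with N hN t
  obtain ⟨c, hc, hdecomp⟩ := exists_fourierBlock_neg_eq f n N
  have hS : ‖f t - partialFourierSum f (N + m) t‖ < ε / 2 := by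
    simpa [dist_eq_norm] using hN₁ (N + m) (by omega) t
  have hcoef : ‖fourierCoef f (c - n) * fourierExp (c - n) t‖ ≤ δ := by
    simpa using hM (c - n) (by omega)
  have hblock : ‖fourierBlock f c m t‖ ≤ (2 * m + 1) * δ :=
    norm_fourierBlock_le_of_norm_fourierCoef_le f c m
      (fun j hj ↦ hM j (by rw [Finset.mem_Icc] at hj; omega)) t
  rw [dist_eq_norm, partialFourierSum_fourierExp_mul, hdecomp, ← mul_sub, norm_mul,
    norm_fourierExp, one_mul]
  calc _ = ‖(f t - partialFourierSum f (N + m) t) + (fourierBlock f c m t -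
        fourierCoef f (c - n) * fourierExp (c - n) t)‖ := by congr 1; ring
    _ ≤ ‖f t - partialFourierSum f (N + m) t‖ + (‖fourierBlock f c m t‖ +
        ‖fourierCoef f (c - n) * fourierExp (c - n) t‖) :=
        (norm_add_le _ _).trans (by gcongr; exact norm_sub_le _ _)
    _ < ε / 2 + ((2 * m + 1) * δ + δ) := add_lt_add_of_lt_of_le hS (add_le_add hblock hcoef)
    _ = ε := by rw [hδ]; field_simp; ring

theorem modulation_uNorm_bound :
    ∃ c : ℝ, 0 < c ∧ ∀ f : ℝ → ℂ, Continuous f → Function.Periodic f (2 * Real.pi) →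
      TendstoUniformly (fun N t => partialFourierSum f N t) f atTop →
      ∀ n : ℤ,
        TendstoUniformly
          (fun N t => partialFourierSum (fun s => Complex.exp ((n : ℂ) * Complex.I * s) * f s) N t)
          (fun s => Complex.exp ((n : ℂ) * Complex.I * s) * f s) atTop ∧
        uNorm (fun s => Complex.exp ((n : ℂ) * Complex.I * s) * f s) ≤
          c * uNorm f * Real.log ((|n| : ℤ) + 2) := by
  refine ⟨7, by norm_num, fun f hf hper hconv n ↦ ?_⟩
  have hfi : IntervalIntegrable f volume (-π) π := hf.intervalIntegrable _ _
  obtain ⟨B, hB⟩ :=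
    isBounded_iff_forall_norm_le.mp (hper.isBounded_of_continuous (by positivity) hf)
  obtain ⟨C, hC⟩ := exists_bound_partialFourierSum (fun s ↦ hB _ ⟨s, rfl⟩) hconv
  refine ⟨tendstoUniformly_partialFourierSum_fourierExp_mul hfi hconv n,
    ciSup_le fun N ↦ ciSup_le fun t ↦ ?_⟩
  exact norm_partialFourierSum_fourierExp_mul_le hfi (norm_le_uNorm hC hconv)
    (norm_partialFourierSum_le_uNorm hC) n N t
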